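/- Fix C₀ > 0. There exist δ > 0, C > 0 and T > 0 such that for all t ≥ T, all real ξ with 0 ≤ (ξ + 1/8)·t^{2/3} ≤ C₀, and all complex z with |z − z_a| ≤ δ, one has |−t·θ₁₂(z) + t·θ₁₂(z_a) − (8/3)·ẑ³ − 2·s̃·ẑ| ≤ C·t^{−1/3}·(|ẑ|² + |ẑ|⁴), where ẑ = (c_a t)^{1/3}(z − z_a) and s̃ = s₁·(1 + 8ξ)·t^{2/3}. -/

import Mathlib

open Real Complex

/-- The complex phase function `θ₁₂(z) = √3·(z − 1/z)·(ξ − 1/((z − 1/z)² + 1))`. -/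
noncomputable def theta12C (ξ : ℝ) (z : ℂ) : ℂ :=
  (Real.sqrt 3 : ℂ) * (z - 1/z) * ((ξ : ℂ) - 1 / ((z - 1/z)^2 + 1))

/-- The colliding saddle point `z_a = (√7 + √3)/2`. -/
noncomputable def zaP : ℝ := (Real.sqrt 7 + Real.sqrt 3) / 2

/-- The cubic-scaling constant `c_a = (21/256)(14√3 − 9√7)`. -/
noncomputable def caP : ℝ := (21/256) * (14 * Real.sqrt 3 - 9 * Real.sqrt 7)

/-- `s₁ = 3^{1/6}(√21 − 7)/(2^{7/3}·7^{1/3}·(14√3 − 9√7)^{1/3})`. -/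
noncomputable def s1P : ℝ :=
  (3:ℝ) ^ ((1:ℝ)/6) * (Real.sqrt 21 - 7) /
    ((2:ℝ) ^ ((7:ℝ)/3) * (7:ℝ) ^ ((1:ℝ)/3) *
      (14 * Real.sqrt 3 - 9 * Real.sqrt 7) ^ ((1:ℝ)/3))

/-!
Write `w = z − 1/z`, so that `w(z_a) = √3` and `w(z) − √3 = (z − z_a)·p(z)` with
`p(z) = 1 + 1/(z z_a)`. The phase splits as `θ₁₂ = θ₀ + (ξ + 1/8)·√3·w`, where `θ₀` is its value
at `ξ = −1/8`, and `θ₀ + 9/8 = −√3 (w − √3)³ / (8(w² + 1))`. Hence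
`θ₁₂(z) − θ₁₂(z_a) = (z − z_a)³ h(z) + (ξ + 1/8)·√3·(z − z_a) p(z)`, where `h = cubicCoeff` and
`p = wSlope` are holomorphic at `z_a` and `h(z_a) = −(8/3) c_a`; the constant `s₁` is exactly the
one for which `2 s̃ (c_a t)^{1/3} = −√3 p(z_a) (ξ + 1/8) t`. Freezing `h` and `p` at `z_a` costs
`O(|z − z_a|)` each, which in the variable `ẑ` becomes `t·O(|z − z_a|⁴) = O(t^{−1/3}|ẑ|⁴)` and,
since `(ξ + 1/8) t^{2/3} ≤ C₀`, `t (ξ + 1/8)·O(|z − z_a|²) = O(t^{−1/3}|ẑ|²)`.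
-/

open Filter Topology Metric

lemma sub_one_div_sub_sub_one_div {K : Type*} [Field K] {z a : K} (hz : z ≠ 0) (ha : a ≠ 0) :
    z - 1 / z - (a - 1 / a) = (z - a) * (1 + 1 / (z * a)) := by
  field_simp; ring

lemma DifferentiableAt.exists_eventually_norm_sub_le {𝕜 E F : Type*} [NontriviallyNormedField 𝕜]
    [NormedAddCommGroup E] [NormedSpace 𝕜 E] [NormedAddCommGroup F] [NormedSpace 𝕜 F]
    {f : E → F} {a : E} (hf : DifferentiableAt 𝕜 f a) :
    ∃ L > 0, ∀ᶠ z in 𝓝 a, ‖f z - f a‖ ≤ L * ‖z - a‖ := by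
  obtain ⟨L, hL, h⟩ := hf.isBigO_sub.exists_pos
  exact ⟨L, hL, h.bound⟩

lemma rpow_one_third_pow_three {t : ℝ} (ht : 0 ≤ t) : (t ^ ((1:ℝ)/3)) ^ 3 = t := by
  rw [← Real.rpow_natCast, ← Real.rpow_mul ht]; norm_num

lemma rpow_two_thirds {t : ℝ} (ht : 0 ≤ t) : t ^ ((2:ℝ)/3) = (t ^ ((1:ℝ)/3)) ^ 2 := by
  rw [← Real.rpow_natCast, ← Real.rpow_mul ht]; norm_num

lemma ofReal_sqrt_three_sq : ((√3 : ℝ) : ℂ) ^ 2 = 3 := by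
  rw [← ofReal_pow, Real.sq_sqrt (by norm_num)]; norm_num

lemma ofReal_sqrt_seven_sq : ((√7 : ℝ) : ℂ) ^ 2 = 7 := by
  rw [← ofReal_pow, Real.sq_sqrt (by norm_num)]; norm_num

lemma sqrt21_eq : √21 = √3 * √7 := by
  rw [← Real.sqrt_mul (by norm_num)]; norm_num

lemma zaP_pos : 0 < zaP := by unfold zaP; positivity

lemma zaP_ne_zero : (zaP : ℂ) ≠ 0 := ofReal_ne_zero.mpr zaP_pos.ne'

lemma one_div_zaP : 1 / zaP = (√7 - √3) / 2 := by
  have h3 := Real.sq_sqrt (show (0:ℝ) ≤ 3 by norm_num)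
  have h7 := Real.sq_sqrt (show (0:ℝ) ≤ 7 by norm_num)
  rw [div_eq_iff zaP_pos.ne']; unfold zaP
  linear_combination -(h7 - h3) / 4

lemma zaP_sub_one_div : (zaP : ℂ) - 1 / zaP = √3 := by
  have h : zaP - 1 / zaP = √3 := by rw [one_div_zaP]; unfold zaP; ring
  exact_mod_cast h

lemma zaP_sub_one_div_sq_add_one : ((zaP : ℂ) - 1 / zaP) ^ 2 + 1 = 4 := by
  rw [zaP_sub_one_div, ofReal_sqrt_three_sq]; norm_num

lemma fourteen_sqrt_three_sub_nine_sqrt_seven_pos : 0 < 14 * √3 - 9 * √7 := by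
  nlinarith [Real.sq_sqrt (show (0:ℝ) ≤ 3 by norm_num), Real.sq_sqrt (show (0:ℝ) ≤ 7 by norm_num),
    Real.sqrt_nonneg 3, Real.sqrt_nonneg 7]

lemma caP_pos : 0 < caP := by
  unfold caP; linarith [fourteen_sqrt_three_sub_nine_sqrt_seven_pos]

lemma caP_rpow_one_third : caP ^ ((1:ℝ)/3)
    = (3:ℝ) ^ ((1:ℝ)/3) * (7:ℝ) ^ ((1:ℝ)/3) / (2:ℝ) ^ ((8:ℝ)/3)
      * (14 * √3 - 9 * √7) ^ ((1:ℝ)/3) := by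
  have h256 : (2:ℝ) ^ ((8:ℝ)/3) = ((2:ℝ) ^ 8) ^ ((1:ℝ)/3) := by
    rw [← Real.rpow_natCast, ← Real.rpow_mul (by norm_num)]; norm_num
  unfold caP
  rw [Real.mul_rpow (by norm_num) fourteen_sqrt_three_sub_nine_sqrt_seven_pos.le]
  congr 1
  rw [h256, ← Real.mul_rpow (by norm_num) (by norm_num),
    ← Real.div_rpow (by norm_num) (by norm_num)]
  norm_num

lemma sixteen_mul_s1P_mul_caP_rpow : 16 * s1P * caP ^ ((1:ℝ)/3) = √3 * (√3 * √7 - 7) / 2 := by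
  have h3 : (3:ℝ) ^ ((1:ℝ)/6) * (3:ℝ) ^ ((1:ℝ)/3) = √3 := by
    rw [← Real.rpow_add (by norm_num), Real.sqrt_eq_rpow]; norm_num
  have h2 : (2:ℝ) ^ ((7:ℝ)/3) * (2:ℝ) ^ ((8:ℝ)/3) = 32 := by
    rw [← Real.rpow_add (by norm_num)]; norm_num
  have hd : (14 * √3 - 9 * √7) ^ ((1:ℝ)/3) ≠ 0 :=
    (Real.rpow_pos_of_pos fourteen_sqrt_three_sub_nine_sqrt_seven_pos _).ne'
  rw [caP_rpow_one_third, s1P, ← sqrt21_eq]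
  field_simp
  linear_combination (32 * (√21 - 7)) * h3 - √3 * (√21 - 7) * h2

lemma theta12C_eq_add (ξ : ℝ) (z : ℂ) :
    theta12C ξ z = theta12C (-1/8) z + ((ξ + 1/8 : ℝ) : ℂ) * (√3 * (z - 1 / z)) := by
  unfold theta12C; push_cast; ring

lemma theta12C_neg_eighth_add (z : ℂ) (hw : (z - 1 / z) ^ 2 + 1 ≠ 0) :
    theta12C (-1/8) z + 9/8 = -√3 * (z - 1 / z - √3) ^ 3 / (8 * ((z - 1 / z) ^ 2 + 1)) := by
  unfold theta12C
  generalize z - 1 / z = w at hw ⊢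
  push_cast
  field_simp
  linear_combination -(3 * w ^ 2 - 3 * √3 * w + (√3:ℂ) ^ 2 + 3) * ofReal_sqrt_three_sq

/-- Divided difference of `w(z) = z − 1/z` between `z_a` and `z`. -/
noncomputable def wSlope (z : ℂ) : ℂ := 1 + 1 / (z * zaP)

noncomputable def cubicCoeff (z : ℂ) : ℂ := -√3 * wSlope z ^ 3 / (8 * ((z - 1 / z) ^ 2 + 1))

lemma sub_one_div_sub_sqrt_three {z : ℂ} (hz : z ≠ 0) : z - 1 / z - √3 = (z - zaP) * wSlope z := by
  rw [← zaP_sub_one_div]; exact sub_one_div_sub_sub_one_div hz zaP_ne_zero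

lemma wSlope_zaP : wSlope zaP = (7 - √3 * √7) / 2 := by
  have h : 1 + 1 / (zaP * zaP) = (7 - √3 * √7) / 2 := by
    rw [← one_div_mul_one_div, one_div_zaP]
    linear_combination
      (Real.sq_sqrt (show (0:ℝ) ≤ 7 by norm_num) + Real.sq_sqrt (show (0:ℝ) ≤ 3 by norm_num)) / 4
  unfold wSlope; exact_mod_cast h

lemma cubicCoeff_zaP : cubicCoeff zaP = -(8/3) * caP := by
  unfold cubicCoeff caP
  rw [zaP_sub_one_div, wSlope_zaP, ofReal_sqrt_three_sq]
  push_cast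
  linear_combination
    (147 * (√7:ℂ) - 21 * √3 * (√7:ℂ) ^ 2 + ((√3:ℂ) ^ 2 + 3) * (√7:ℂ) ^ 3) / 256
        * ofReal_sqrt_three_sq
      + (-63 * (√3:ℂ) + 9 * √7) / 256 * ofReal_sqrt_seven_sq

lemma differentiableAt_wSlope : DifferentiableAt ℂ wSlope zaP := by
  unfold wSlope; fun_prop (disch := exact mul_ne_zero zaP_ne_zero zaP_ne_zero)

lemma differentiableAt_cubicCoeff : DifferentiableAt ℂ cubicCoeff zaP := by
  have hw : 8 * (((zaP : ℂ) - 1 / zaP) ^ 2 + 1) ≠ 0 := by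
    rw [zaP_sub_one_div, ofReal_sqrt_three_sq]; norm_num
  unfold cubicCoeff
  have := differentiableAt_wSlope
  fun_prop (disch := first | assumption | exact zaP_ne_zero)

lemma theta12C_sub_theta12C_zaP (ξ : ℝ) {z : ℂ} (hz : z ≠ 0) (hw : (z - 1 / z) ^ 2 + 1 ≠ 0) :
    theta12C ξ z - theta12C ξ zaP
      = (z - zaP) ^ 3 * cubicCoeff z + ((ξ + 1/8 : ℝ) : ℂ) * √3 * ((z - zaP) * wSlope z) := by
  have hz' := theta12C_neg_eighth_add z hw
  have hza : theta12C (-1/8) zaP + 9/8 = 0 := by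
    rw [theta12C_neg_eighth_add _ (by rw [zaP_sub_one_div_sq_add_one]; norm_num), zaP_sub_one_div]
    simp
  rw [sub_one_div_sub_sqrt_three hz] at hz'
  rw [theta12C_eq_add ξ z, theta12C_eq_add ξ zaP, zaP_sub_one_div, cubicCoeff]
  linear_combination hz' - hza + ((ξ + 1/8 : ℝ) : ℂ) * √3 * sub_one_div_sub_sqrt_three hz

lemma eventually_ne_zero_and_sub_one_div_sq_add_one_ne_zero :
    ∀ᶠ z in 𝓝 (zaP : ℂ), z ≠ 0 ∧ (z - 1 / z) ^ 2 + 1 ≠ 0 := by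
  have hcont : ContinuousAt (fun z : ℂ => (z - 1 / z) ^ 2 + 1) zaP := by
    fun_prop (disch := exact zaP_ne_zero)
  exact (continuousAt_id.eventually_ne zaP_ne_zero).and
    (hcont.eventually_ne (by rw [zaP_sub_one_div_sq_add_one]; norm_num))

lemma theta12C_local_expansion : ∃ δ > 0, ∃ L > 0, ∀ ξ : ℝ, ∀ z : ℂ, ‖z - zaP‖ ≤ δ →
    ‖theta12C ξ z - theta12C ξ zaP + (8/3) * caP * (z - zaP) ^ 3
        - ((ξ + 1/8 : ℝ) : ℂ) * √3 * wSlope zaP * (z - zaP)‖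
      ≤ L * (‖z - zaP‖ ^ 4 + |ξ + 1/8| * ‖z - zaP‖ ^ 2) := by
  obtain ⟨L₁, hL₁, hcubic⟩ := differentiableAt_cubicCoeff.exists_eventually_norm_sub_le
  obtain ⟨L₂, hL₂, hslope⟩ := differentiableAt_wSlope.exists_eventually_norm_sub_le
  obtain ⟨δ, hδ, hball⟩ := nhds_basis_closedBall.eventually_iff.mp
    (eventually_ne_zero_and_sub_one_div_sq_add_one_ne_zero.and (hcubic.and hslope))
  refine ⟨δ, hδ, L₁ + √3 * L₂, by positivity, fun ξ z hz => ?_⟩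
  obtain ⟨⟨hz0, hw⟩, hc, hs⟩ := hball (mem_closedBall_iff_norm.mpr hz)
  have hrem : theta12C ξ z - theta12C ξ zaP + (8/3) * caP * (z - zaP) ^ 3
        - ((ξ + 1/8 : ℝ) : ℂ) * √3 * wSlope zaP * (z - zaP)
      = (z - zaP) ^ 3 * (cubicCoeff z - cubicCoeff zaP)
        + ((ξ + 1/8 : ℝ) : ℂ) * √3 * (z - zaP) * (wSlope z - wSlope zaP) := by
    rw [theta12C_sub_theta12C_zaP ξ hz0 hw, cubicCoeff_zaP]; ring
  rw [hrem]
  set u := ‖z - zaP‖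
  calc
    _ ≤ u ^ 3 * (L₁ * u) + |ξ + 1/8| * √3 * u * (L₂ * u) := by
      grw [norm_add_le, norm_mul, norm_mul, norm_mul, norm_mul, norm_pow, norm_real, norm_real,
        Real.norm_eq_abs, Real.norm_of_nonneg (Real.sqrt_nonneg 3), hc, hs]
    _ ≤ (L₁ + √3 * L₂) * (u ^ 4 + |ξ + 1/8| * u ^ 2) := by
      nlinarith [mul_nonneg (mul_nonneg hL₁.le (abs_nonneg (ξ + 1/8))) (sq_nonneg u),
        mul_nonneg (mul_nonneg (Real.sqrt_nonneg 3) hL₂.le) (pow_nonneg (norm_nonneg (z - zaP)) 4)]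

lemma rescaled_phase_remainder_eq {t : ℝ} (ht : 0 ≤ t) (ξ : ℝ) (z : ℂ) :
    -(t : ℂ) * theta12C ξ z + (t : ℂ) * theta12C ξ zaP
        - (8/3) * ((((caP * t) ^ ((1:ℝ)/3) : ℝ) : ℂ) * (z - zaP)) ^ 3
        - 2 * ((s1P * (1 + 8*ξ) * t ^ ((2:ℝ)/3) : ℝ) : ℂ)
          * ((((caP * t) ^ ((1:ℝ)/3) : ℝ) : ℂ) * (z - zaP))
      = -(t : ℂ) * (theta12C ξ z - theta12C ξ zaP + (8/3) * caP * (z - zaP) ^ 3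
          - ((ξ + 1/8 : ℝ) : ℂ) * √3 * wSlope zaP * (z - zaP)) := by
  rw [Real.mul_rpow caP_pos.le ht, rpow_two_thirds ht, wSlope_zaP]
  have hκ : ((caP ^ ((1:ℝ)/3) : ℝ) : ℂ) ^ 3 = caP := by
    exact_mod_cast rpow_one_third_pow_three caP_pos.le
  have hρ : ((t ^ ((1:ℝ)/3) : ℝ) : ℂ) ^ 3 = t := by
    exact_mod_cast rpow_one_third_pow_three ht
  have hs : 16 * (s1P : ℂ) * ((caP ^ ((1:ℝ)/3) : ℝ) : ℂ) = √3 * (√3 * √7 - 7) / 2 := by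
    exact_mod_cast sixteen_mul_s1P_mul_caP_rpow
  push_cast
  generalize ((caP ^ ((1:ℝ)/3) : ℝ) : ℂ) = κ at hκ hs ⊢
  generalize ((t ^ ((1:ℝ)/3) : ℝ) : ℂ) = ρ at hρ ⊢
  linear_combination (-(8/3) * (z - zaP) ^ 3 * t) * hκ
    + (-(8/3) * (z - zaP) ^ 3 * κ ^ 3 + (ξ + 1/8) * √3 * (7 - √3 * √7) / 2 * (z - zaP)) * hρ
    + (-(ξ + 1/8) * ρ ^ 3 * (z - zaP)) * hs

lemma mul_remainder_le_rescaled {c t ε C₀ L : ℝ} (hc : 0 < c) (ht : 0 < t) (hε : 0 ≤ ε)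
    (hεt : ε * t ^ ((2:ℝ)/3) ≤ C₀) (hL : 0 ≤ L) (u : ℂ) :
    t * (L * (‖u‖ ^ 4 + ε * ‖u‖ ^ 2))
      ≤ L * (1 / (c ^ ((1:ℝ)/3)) ^ 4 + C₀ / (c ^ ((1:ℝ)/3)) ^ 2) * t ^ (-(1:ℝ)/3)
        * (‖(((c * t) ^ ((1:ℝ)/3) : ℝ) : ℂ) * u‖ ^ 2
          + ‖(((c * t) ^ ((1:ℝ)/3) : ℝ) : ℂ) * u‖ ^ 4) := by
  have hκ : 0 < c ^ ((1:ℝ)/3) := Real.rpow_pos_of_pos hc _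
  have hρ : 0 < t ^ ((1:ℝ)/3) := Real.rpow_pos_of_pos ht _
  rw [rpow_two_thirds ht.le] at hεt
  rw [Real.mul_rpow hc.le ht.le, norm_mul, norm_real, Real.norm_of_nonneg (by positivity),
    neg_div, Real.rpow_neg ht.le]
  nth_rw 1 [← rpow_one_third_pow_three ht.le]
  generalize c ^ ((1:ℝ)/3) = κ at hκ ⊢
  generalize t ^ ((1:ℝ)/3) = ρ at hρ hεt ⊢
  have hC₀ : 0 ≤ C₀ := (mul_nonneg hε (sq_nonneg ρ)).trans hεt
  have hexpand : L * (1 / κ ^ 4 + C₀ / κ ^ 2) * ρ⁻¹ * ((κ * ρ * ‖u‖) ^ 2 + (κ * ρ * ‖u‖) ^ 4)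
      = L * (ρ ^ 3 * ‖u‖ ^ 4 + C₀ * ρ * ‖u‖ ^ 2)
        + L * (ρ * ‖u‖ ^ 2 / κ ^ 2 + C₀ * κ ^ 2 * ρ ^ 3 * ‖u‖ ^ 4) := by
    field_simp; ring
  rw [hexpand]
  have hmain : ε * ρ ^ 3 * ‖u‖ ^ 2 ≤ C₀ * ρ * ‖u‖ ^ 2 := by
    have := mul_le_mul_of_nonneg_right hεt (by positivity : 0 ≤ ρ * ‖u‖ ^ 2)
    linarith
  nlinarith [mul_le_mul_of_nonneg_left hmain hL, mul_nonneg hL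
    (by positivity : 0 ≤ ρ * ‖u‖ ^ 2 / κ ^ 2 + C₀ * κ ^ 2 * ρ ^ 3 * ‖u‖ ^ 4)]

/-- Local phase expansion near `z_a`: for `0 ≤ (ξ + 1/8)t^{2/3} ≤ C₀` and `z` near `z_a`,
`−tθ₁₂(z) = −tθ₁₂(z_a) + (8/3)zhat³ + 2stildezhat + O(t^{−1/3}(|zhat|² + |zhat|⁴))`, where
`zhat = (c_a t)^{1/3}(z − z_a)` and `stilde = s₁(1 + 8ξ)t^{2/3}`. -/
theorem local_phase_expansion_za (C₀ : ℝ) (hC₀ : 0 < C₀) :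
    ∃ δ > (0:ℝ), ∃ C > (0:ℝ), ∃ T > (0:ℝ), ∀ t : ℝ, T ≤ t → ∀ ξ : ℝ,
      0 ≤ (ξ + 1/8) * t ^ ((2:ℝ)/3) → (ξ + 1/8) * t ^ ((2:ℝ)/3) ≤ C₀ →
      ∀ z : ℂ, ‖z - (zaP : ℂ)‖ ≤ δ →
        let zhat : ℂ := (((caP * t) ^ ((1:ℝ)/3) : ℝ) : ℂ) * (z - (zaP : ℂ))
        let stilde : ℝ := s1P * (1 + 8*ξ) * t ^ ((2:ℝ)/3)
        ‖-(t : ℂ) * theta12C ξ z + (t : ℂ) * theta12C ξ (zaP : ℂ)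
            - (8/3) * zhat^3 - 2 * (stilde : ℂ) * zhat‖
          ≤ C * t ^ (-(1:ℝ)/3) * (‖zhat‖^2 + ‖zhat‖^4) := by
  obtain ⟨δ, hδ, L, hL, hexpansion⟩ := theta12C_local_expansion
  have hκ : 0 < caP ^ ((1:ℝ)/3) := Real.rpow_pos_of_pos caP_pos _
  refine ⟨δ, hδ, L * (1 / (caP ^ ((1:ℝ)/3)) ^ 4 + C₀ / (caP ^ ((1:ℝ)/3)) ^ 2), by positivity,
    1, one_pos, fun t ht ξ hξ₀ hξ₁ z hz => ?_⟩
  have ht₀ : 0 < t := one_pos.trans_le ht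
  have hε : 0 ≤ ξ + 1/8 := nonneg_of_mul_nonneg_left hξ₀ (by positivity)
  dsimp only
  rw [rescaled_phase_remainder_eq ht₀.le, norm_mul, norm_neg, norm_real, Real.norm_of_nonneg ht₀.le]
  grw [hexpansion ξ z hz, abs_of_nonneg hε]
  exact mul_remainder_le_rescaled caP_pos ht₀ hε hξ₁ hL.le _
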